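/- arXiv:1510.08906 — 2 statements merged into one kernel-verified Lean document; each statement's English description precedes it below -/
import Mathlib

section
/- For all 1 ≤ i ≤ j ≤ H and all s ∈ S, the variance of the value function equals the propagated sum of local variances: 𝒱_{i:j}(s) = Σ_{t=i}^{j} (P_{i:t−1} σ²_{t:j})(s). -/
open Finset

/-- The operator `(P_t f)(s) = ∑_{s'} p_t(s,s') f(s')` induced by transition matrices `p`. -/
noncomputable def Pop {S : Type*} [Fintype S] (p : ℕ → S → S → ℝ) (t : ℕ) (f : S → ℝ) (s : S) : ℝ :=
  ∑ s', p t s s' * f s'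

/-- The multi-step operator `P_{i:j} = P_i P_{i+1} ⋯ P_j` (identity when `j < i`). -/
noncomputable def PC {S : Type*} [Fintype S] (p : ℕ → S → S → ℝ) (i j : ℕ) (f : S → ℝ) : S → ℝ :=
  (List.range' i (j + 1 - i)).foldr (fun t g => Pop p t g) f

/-- The value function: `V_{j:j} = r_j`, `V_{i:j} = r_i + P_i V_{i+1:j}` for `i < j`. -/
noncomputable def Vf {S : Type*} [Fintype S] (p : ℕ → S → S → ℝ) (r : ℕ → S → ℝ)
    (i j : ℕ) : S → ℝ :=
  if _h : i < j then fun s => r i s + Pop p i (Vf p r (i + 1) j) s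
  else r j
termination_by j - i
decreasing_by omega

/-- The trajectory `s_i = s, s_{i+1} = σ 0, …, s_{i+k} = σ (k-1)` as a function of time
(states outside `{i, …, i+k}` are irrelevant and set to `s`, resp. `σ`'s last values). -/
def pathFn {S : Type*} (s : S) (i : ℕ) {k : ℕ} (σ : Fin k → S) (t : ℕ) : S :=
  if h : i < t ∧ t - i - 1 < k then σ ⟨t - i - 1, h.2⟩ else s

/-- Expectation over trajectories of the Markov chain started in state `s` at time `i`,
running until time `j`: `E_{s,i:j}[g] = ∑_{s_{i+1},…,s_j} (∏_{t=i}^{j-1} p_t(s_t,s_{t+1})) g(s_i,…,s_j)`. -/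
noncomputable def Ex {S : Type*} [Fintype S] (p : ℕ → S → S → ℝ) (i j : ℕ) (s : S)
    (g : (ℕ → S) → ℝ) : ℝ :=
  ∑ σ : Fin (j - i) → S,
    (∏ t ∈ Finset.Ico i j, p t (pathFn s i σ t) (pathFn s i σ (t + 1))) * g (pathFn s i σ)

/-- The local variance of the value function:
`σ²_{i:j}(s) = ∑_{s'} p_i(s,s') (V_{i+1:j}(s') − (P_i V_{i+1:j})(s))²` for `i < j`, and `0` else. -/
noncomputable def sigmaSq {S : Type*} [Fintype S] (p : ℕ → S → S → ℝ) (r : ℕ → S → ℝ)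
    (i j : ℕ) (s : S) : ℝ :=
  if i < j then
    ∑ s', p i s s' * (Vf p r (i + 1) j s' - Pop p i (Vf p r (i + 1) j) s) ^ 2
  else 0

/-- The variance of the value function:
`𝒱_{i:j}(s) = E_{s,i:j}[(∑_{t=i}^j r_t(s_t) − V_{i:j}(s))²]`. -/
noncomputable def VarV {S : Type*} [Fintype S] (p : ℕ → S → S → ℝ) (r : ℕ → S → ℝ)
    (i j : ℕ) (s : S) : ℝ :=
  Ex p i j s (fun τ => ((∑ t ∈ Finset.Icc i j, r t (τ t)) - Vf p r i j s) ^ 2)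

/-! Peeling off the first transition of a trajectory turns `𝒱_{i:j}` into a one-step recursion:
conditioning on `s_{i+1}`, the bias-variance decomposition splits the squared deviation of the
return into the variance from time `i + 1` on and the squared deviation of `V_{i+1:j}(s_{i+1})`
from its mean, which is `σ²_{i:j}`. Unrolling `𝒱_{i:j} = σ²_{i:j} + P_i 𝒱_{i+1:j}` gives the sum. -/

section Trajectories

variable {S : Type*}

lemma pathFn_of_le (s : S) {i k t : ℕ} (σ : Fin k → S) (h : t ≤ i) : pathFn s i σ t = s :=
  dif_neg (by omega)

lemma pathFn_cons_of_lt (s s' : S) {i n t : ℕ} (σ : Fin n → S) (h₁ : i < t) (h₂ : t ≤ i + 1 + n) :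
    pathFn s i (Fin.cons s' σ : Fin (n + 1) → S) t = pathFn s' (i + 1) σ t := by
  obtain rfl | h := eq_or_lt_of_le (Nat.succ_le_of_lt h₁)
  · rw [pathFn, dif_pos ⟨h₁, by omega⟩, pathFn_of_le s' σ le_rfl]
    convert Fin.cons_zero (α := fun _ => S) s' σ using 2
    ext
    simp
  · rw [pathFn, pathFn, dif_pos ⟨h₁, by omega⟩, dif_pos ⟨h, by omega⟩]
    convert Fin.cons_succ (α := fun _ => S) s' σ _ using 2
    ext
    simp only [Fin.val_succ]
    omega

end Trajectories

section Expectation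

variable {S : Type*} [Fintype S] (p : ℕ → S → S → ℝ)

lemma Ex_self (i : ℕ) (s : S) (g : (ℕ → S) → ℝ) : Ex p i i s g = g (fun _ => s) := by
  have hpath (σ : Fin (i - i) → S) : pathFn s i σ = fun _ => s :=
    funext fun _ => dif_neg (by omega)
  simp [Ex, hpath]

lemma Ex_add (i j : ℕ) (s : S) (g₁ g₂ : (ℕ → S) → ℝ) :
    Ex p i j s (fun τ => g₁ τ + g₂ τ) = Ex p i j s g₁ + Ex p i j s g₂ := by
  simp only [Ex, mul_add, sum_add_distrib]

lemma Ex_const_mul (i j : ℕ) (s : S) (c : ℝ) (g : (ℕ → S) → ℝ) :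
    Ex p i j s (fun τ => c * g τ) = c * Ex p i j s g := by
  simp only [Ex, mul_sum, mul_left_comm]

lemma Ex_congr {i j : ℕ} {s : S} {g₁ g₂ : (ℕ → S) → ℝ}
    (h : ∀ τ : ℕ → S, τ i = s → g₁ τ = g₂ τ) : Ex p i j s g₁ = Ex p i j s g₂ :=
  sum_congr rfl fun σ _ => by rw [h _ (pathFn_of_le s σ le_rfl)]

lemma Ex_eq_sum_mul_Ex_succ {i j : ℕ} (hij : i < j) (s : S) (g : (ℕ → S) → ℝ)
    (hg : ∀ τ τ' : ℕ → S, Set.EqOn τ τ' (Set.Icc i j) → g τ = g τ') :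
    Ex p i j s g =
      ∑ s', p i s s' * Ex p (i + 1) j s' (fun τ => g (Function.update τ i s)) := by
  obtain ⟨n, hn⟩ : ∃ n, j - i = n + 1 := ⟨j - i - 1, by omega⟩
  have hn' : j - (i + 1) = n := by omega
  unfold Ex
  rw [hn, hn', ← (Fin.consEquiv fun _ : Fin (n + 1) => S).sum_comp, Fintype.sum_prod_type]
  refine sum_congr rfl fun s' _ => ?_
  rw [mul_sum]
  refine sum_congr rfl fun σ _ => ?_
  have hcons : ∀ t, i < t → t ≤ j →
      pathFn s i ((Fin.consEquiv fun _ => S) (s', σ)) t = pathFn s' (i + 1) σ t :=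
    fun t h₁ h₂ => pathFn_cons_of_lt s s' σ h₁ (by omega)
  have hprod : ∏ t ∈ Ico i j, p t (pathFn s i ((Fin.consEquiv fun _ => S) (s', σ)) t)
        (pathFn s i ((Fin.consEquiv fun _ => S) (s', σ)) (t + 1)) =
      p i s s' *
        ∏ t ∈ Ico (i + 1) j, p t (pathFn s' (i + 1) σ t) (pathFn s' (i + 1) σ (t + 1)) := by
    rw [prod_eq_prod_Ico_succ_bot hij, pathFn_of_le s _ le_rfl, hcons _ (by omega) hij,
      pathFn_of_le s' σ le_rfl]
    refine congrArg _ (prod_congr rfl fun t ht => ?_)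
    rw [mem_Ico] at ht
    rw [hcons t (by omega) (by omega), hcons (t + 1) (by omega) (by omega)]
  have hpath : Set.EqOn (pathFn s i ((Fin.consEquiv fun _ => S) (s', σ)))
      (Function.update (pathFn s' (i + 1) σ) i s) (Set.Icc i j) := by
    rintro t ⟨h₁, h₂⟩
    obtain rfl | h₁ := eq_or_lt_of_le h₁
    · rw [Function.update_self, pathFn_of_le s _ le_rfl]
    · rw [Function.update_of_ne h₁.ne', hcons t h₁ h₂]
  rw [hprod, hg _ _ hpath, mul_assoc]

lemma Ex_comp_sum_eq_sum_mul_Ex_succ {i j : ℕ} (hij : i < j) (s : S) (f : ℕ → S → ℝ)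
    (φ : ℝ → ℝ) :
    Ex p i j s (fun τ => φ (∑ t ∈ Icc i j, f t (τ t))) =
      ∑ s', p i s s' *
        Ex p (i + 1) j s' (fun τ => φ (f i s + ∑ t ∈ Icc (i + 1) j, f t (τ t))) := by
  rw [Ex_eq_sum_mul_Ex_succ p hij s _ fun τ τ' h =>
    congrArg φ (sum_congr rfl fun t ht => by rw [h (by simpa using ht)])]
  refine sum_congr rfl fun s' _ => congrArg _ (Ex_congr p fun τ _ => congrArg φ ?_)
  rw [← Ioc_insert_left hij.le, sum_insert left_notMem_Ioc, Function.update_self,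
    Icc_add_one_left_eq_Ioc]
  refine congrArg _ (sum_congr rfl fun t ht => ?_)
  rw [Function.update_of_ne (mem_Ioc.mp ht).1.ne']

def RowSumsEqOneOn (p : ℕ → S → S → ℝ) (I : Finset ℕ) : Prop :=
  ∀ t ∈ I, ∀ s, ∑ s', p t s s' = 1

lemma RowSumsEqOneOn.succ {p : ℕ → S → S → ℝ} {i j : ℕ} (hp : RowSumsEqOneOn p (Ico i j)) :
    RowSumsEqOneOn p (Ico (i + 1) j) :=
  fun t ht => hp t (Ico_subset_Ico_left i.le_succ ht)

lemma Ex_const {i j : ℕ} (hij : i ≤ j) (hp : RowSumsEqOneOn p (Ico i j)) (s : S)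
    (c : ℝ) : Ex p i j s (fun _ => c) = c := by
  induction hij using Nat.decreasingInduction generalizing s with
  | self => exact Ex_self p j s _
  | of_succ i hij ih =>
    rw [Ex_eq_sum_mul_Ex_succ p hij s _ fun _ _ _ => rfl]
    simp only [ih hp.succ, ← sum_mul, hp i (left_mem_Ico.2 hij) s, one_mul]

lemma Ex_sub_sq {i j : ℕ} (hij : i ≤ j) (hp : RowSumsEqOneOn p (Ico i j)) (s : S)
    (X : (ℕ → S) → ℝ) (a : ℝ) :
    Ex p i j s (fun τ => (X τ - a) ^ 2) =
      Ex p i j s (fun τ => (X τ - Ex p i j s X) ^ 2) + (Ex p i j s X - a) ^ 2 := by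
  set m := Ex p i j s X
  have hsplit : (fun τ => (X τ - a) ^ 2) =
      fun τ => (X τ - m) ^ 2 + (2 * (m - a) * X τ + ((m - a) ^ 2 - 2 * (m - a) * m)) := by
    funext τ
    ring
  rw [hsplit, Ex_add, Ex_add, Ex_const_mul, Ex_const p hij hp]
  ring

end Expectation

section ValueFunction

variable {S : Type*} [Fintype S] (p : ℕ → S → S → ℝ) (r : ℕ → S → ℝ)

lemma Pop_sum {ι : Type*} (K : Finset ι) (t : ℕ) (f : ι → S → ℝ) (s : S) :
    Pop p t (fun s' => ∑ k ∈ K, f k s') s = ∑ k ∈ K, Pop p t (f k) s := by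
  simp only [Pop, mul_sum]
  exact sum_comm

lemma PC_of_lt {i j : ℕ} (h : j < i) (f : S → ℝ) : PC p i j f = f := by
  rw [PC, show j + 1 - i = 0 by omega]
  rfl

lemma PC_eq_Pop_PC {i j : ℕ} (h : i ≤ j) (f : S → ℝ) :
    PC p i j f = Pop p i (PC p (i + 1) j f) := by
  rw [PC, PC, show j + 1 - i = j + 1 - (i + 1) + 1 by omega]
  rfl

lemma Vf_self (j : ℕ) : Vf p r j j = r j := by
  rw [Vf, dif_neg (lt_irrefl j)]

lemma Vf_of_lt {i j : ℕ} (h : i < j) (s : S) :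
    Vf p r i j s = r i s + Pop p i (Vf p r (i + 1) j) s := by
  rw [Vf, dif_pos h]

lemma sigmaSq_self (j : ℕ) (s : S) : sigmaSq p r j j s = 0 :=
  if_neg (lt_irrefl j)

lemma VarV_self (j : ℕ) (s : S) : VarV p r j j s = 0 := by
  simp [VarV, Ex_self, Vf_self]

lemma Ex_sum_Icc_eq_Vf {i j : ℕ} (hij : i ≤ j) (hp : RowSumsEqOneOn p (Ico i j))
    (s : S) : Ex p i j s (fun τ => ∑ t ∈ Icc i j, r t (τ t)) = Vf p r i j s := by
  induction hij using Nat.decreasingInduction generalizing s with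
  | self => simp [Ex_self, Vf_self]
  | of_succ i hij ih =>
    rw [Ex_comp_sum_eq_sum_mul_Ex_succ p hij s r (fun x => x), Vf_of_lt p r hij, Pop]
    simp only [Ex_add p (i + 1) j _ (fun _ => r i s), Ex_const p hij hp.succ, ih hp.succ, mul_add,
      sum_add_distrib, ← sum_mul, hp i (left_mem_Ico.2 hij) s, one_mul]

lemma VarV_succ {i j : ℕ} (hij : i < j) (hp : RowSumsEqOneOn p (Ico i j)) (s : S) :
    VarV p r i j s = sigmaSq p r i j s + Pop p i (VarV p r (i + 1) j) s := by
  have hdev (x : ℝ) : r i s + x - Vf p r i j s = x - Pop p i (Vf p r (i + 1) j) s := by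
    rw [Vf_of_lt p r hij]
    ring
  rw [VarV, Ex_comp_sum_eq_sum_mul_Ex_succ p hij s r fun x => (x - Vf p r i j s) ^ 2, sigmaSq,
    if_pos hij, Pop.eq_1 p i (VarV p r (i + 1) j), ← sum_add_distrib]
  refine sum_congr rfl fun s' _ => ?_
  simp only [hdev]
  rw [Ex_sub_sq p hij hp.succ s', Ex_sum_Icc_eq_Vf p r hij hp.succ, VarV]
  ring

lemma VarV_eq_sum_PC_sigmaSq {i j : ℕ} (hi : 0 < i) (hij : i ≤ j)
    (hp : RowSumsEqOneOn p (Ico i j)) (s : S) :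
    VarV p r i j s = ∑ t ∈ Icc i j, PC p i (t - 1) (sigmaSq p r t j) s := by
  induction hij using Nat.decreasingInduction generalizing s with
  | self => rw [VarV_self, Icc_self, sum_singleton, PC_of_lt p (by omega), sigmaSq_self]
  | of_succ i hij ih =>
    rw [VarV_succ p r hij hp, ← Ioc_insert_left hij.le, sum_insert left_notMem_Ioc,
      PC_of_lt p (by omega), ← Icc_add_one_left_eq_Ioc, funext (ih (by omega) hp.succ), Pop_sum]
    refine congrArg _ (sum_congr rfl fun t ht => ?_)
    rw [mem_Icc] at ht
    exact congrFun (PC_eq_Pop_PC p (by omega) _).symm s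

end ValueFunction

theorem variance_eq_sum_propagated_local_variances_general
    {S : Type*} [Fintype S] (H : ℕ)
    (r : ℕ → S → ℝ) (p : ℕ → S → S → ℝ)
    (hp_sum : ∀ t, 1 ≤ t → t ≤ H → ∀ s, ∑ s', p t s s' = 1)
    (i j : ℕ) (hi : 1 ≤ i) (hij : i ≤ j) (hj : j ≤ H) (s : S) :
    VarV p r i j s = ∑ t ∈ Finset.Icc i j, PC p i (t - 1) (sigmaSq p r t j) s :=
  VarV_eq_sum_PC_sigmaSq p r hi hij
    (fun t ht => hp_sum t (hi.trans (mem_Ico.1 ht).1) ((mem_Ico.1 ht).2.le.trans hj)) s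

/-- The variance of the value function equals the propagated sum of local variances. -/
theorem variance_eq_sum_propagated_local_variances
    {S : Type*} [Fintype S] [Nonempty S] (H : ℕ) (hH : 1 ≤ H)
    (r : ℕ → S → ℝ) (p : ℕ → S → S → ℝ)
    (hp_nonneg : ∀ t, 1 ≤ t → t ≤ H → ∀ s s', 0 ≤ p t s s')
    (hp_sum : ∀ t, 1 ≤ t → t ≤ H → ∀ s, ∑ s', p t s s' = 1)
    (i j : ℕ) (hi : 1 ≤ i) (hij : i ≤ j) (hj : j ≤ H) (s : S) :
    VarV p r i j s = ∑ t ∈ Finset.Icc i j, PC p i (t - 1) (sigmaSq p r t j) s :=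
  variance_eq_sum_propagated_local_variances_general H r p hp_sum i j hi hij hj s
end

section
/- Assume all rewards are nonnegative (r_t(s) ≥ 0 for all t, s). Fix 1 ≤ i < j ≤ H, a state s ∈ S, an integer n ≥ 2, a real L > 0, and a subset N ⊆ S such that p_i(s,s') = 0 and p̃_i(s,s') = 0 for all s' ∉ N. Suppose that for every s' ∈ N there exists p̂(s') ∈ [0,1] with p_i(s,s') ∈ 𝒫(p̂(s'),n,L) and p̃_i(s,s') in the convex hull of 𝒫(p̂(s'),n,L). Then |((P_i − P̃_i) Ṽ_{i+1:j})(s)| ≤ (26·|N|·L/(3(n−1)))·‖Ṽ_{i+1:j}‖_∞ + √(8·|N|·L/n)·σ̃_{i:j}(s), where ‖f‖_∞ := max_{s'∈S} |f(s')|. -/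
open Finset

/-- The sup-norm `‖f‖_∞ = max_{s} |f s|` of a function on a finite nonempty type. -/
noncomputable def supNorm {S : Type*} [Fintype S] [Nonempty S] (f : S → ℝ) : ℝ :=
  Finset.univ.sup' Finset.univ_nonempty (fun s => |f s|)

/-- The confidence set `𝒫(p̂,n,L)` of transition probabilities. -/
def confSet (phat : ℝ) (n : ℕ) (L : ℝ) : Set ℝ :=
  {p' | 0 ≤ p' ∧ p' ≤ 1 ∧
    |Real.sqrt (p' * (1 - p')) - Real.sqrt (phat * (1 - phat))| ≤
      Real.sqrt (2 * L / ((n : ℝ) - 1)) ∧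
    |phat - p'| ≤ Real.sqrt (L / (2 * n)) ∧
    |phat - p'| ≤ Real.sqrt (2 * phat * (1 - phat) * L / n) + 7 * L / (3 * ((n : ℝ) - 1))}

/-!
Centre the difference at `μ = (P̃_i Ṽ)(s)`: since both rows sum to one,
`((P_i - P̃_i) Ṽ)(s) = ∑_{s' ∈ N} (p - p̃)(s') (Ṽ(s') - μ)`.
Both `p(s')` and `p̃(s')` are within `√(2 p̂(1-p̂) L/n) + 7L/(3(n-1))` of `p̂`, and the lower
bound on `√(x(1-x))` survives in the convex hull, so `√(p̂(1-p̂))` may be traded for `√(p̃(s'))` at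
the cost of a further `O(L/(n-1))`. This gives `|p - p̃| ≤ 2√(2L/n) √p̃ + 26L/(3(n-1))`
pointwise. The constant part is paid against `|Ṽ - μ| ≤ ‖Ṽ‖_∞` (both are nonnegative), and the
`√p̃` part by Cauchy–Schwarz against the local variance.
-/

section ConfidenceSet

theorem convex_setOf_le_sqrt_mul_one_sub (c : ℝ) :
    Convex ℝ {y : ℝ | c ≤ √(y * (1 - y))} := by
  rcases le_or_gt c 0 with hc | hc
  · convert convex_univ (𝕜 := ℝ) (E := ℝ)
    exact Set.eq_univ_of_forall fun y => hc.trans (Real.sqrt_nonneg _)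
  · simp_rw [Real.le_sqrt' hc]
    intro x hx y hy a b ha hb hab
    change c ^ 2 ≤ x * (1 - x) at hx
    change c ^ 2 ≤ y * (1 - y) at hy
    show c ^ 2 ≤ (a * x + b * y) * (1 - (a * x + b * y))
    have hid : (a * x + b * y) * (1 - (a * x + b * y)) =
        a * (x * (1 - x)) + b * (y * (1 - y)) + a * b * (x - y) ^ 2 := by
      linear_combination (-(a * x ^ 2 + b * y ^ 2)) * hab
    rw [hid]
    nlinarith [mul_le_mul_of_nonneg_left hx ha, mul_le_mul_of_nonneg_left hy hb,
      mul_nonneg (mul_nonneg ha hb) (sq_nonneg (x - y))]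

theorem convexHull_confSet_subset (phat : ℝ) (n : ℕ) (L : ℝ) :
    convexHull ℝ (confSet phat n L) ⊆
      {y : ℝ | √(phat * (1 - phat)) - √(2 * L / ((n : ℝ) - 1)) ≤ √(y * (1 - y))} ∩
        Metric.closedBall phat (√(2 * phat * (1 - phat) * L / n) + 7 * L / (3 * ((n : ℝ) - 1))) := by
  refine convexHull_min ?_ ((convex_setOf_le_sqrt_mul_one_sub _).inter (convex_closedBall _ _))
  rintro x ⟨-, -, hvar, -, hdev⟩
  refine ⟨?_, ?_⟩
  · show (_ : ℝ) ≤ _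
    linarith [(abs_le.mp hvar).1]
  rwa [Metric.mem_closedBall, Real.dist_eq, abs_sub_comm]

variable {n : ℕ} {L : ℝ}

theorem sqrt_two_mul_var_le (hn : 2 ≤ n) (hL : 0 ≤ L) {phat y : ℝ}
    (hy : √(phat * (1 - phat)) - √(2 * L / ((n : ℝ) - 1)) ≤ √(y * (1 - y))) :
    √(2 * phat * (1 - phat) * L / n) ≤ √(2 * L / n) * √y + 2 * L / ((n : ℝ) - 1) := by
  have hn1 : (0 : ℝ) < (n : ℝ) - 1 := sub_pos.2 (Nat.one_lt_cast.2 hn)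
  have hsplit : √(2 * phat * (1 - phat) * L / n) = √(2 * L / n) * √(phat * (1 - phat)) := by
    rw [← Real.sqrt_mul (by positivity)]
    ring_nf
  have hvar_le : √(y * (1 - y)) ≤ √y := Real.sqrt_le_sqrt (by nlinarith [sq_nonneg y])
  have hcross : √(2 * L / n) * √(2 * L / ((n : ℝ) - 1)) ≤ 2 * L / ((n : ℝ) - 1) := by
    have hle : 2 * L / (n : ℝ) ≤ 2 * L / ((n : ℝ) - 1) :=
      div_le_div_of_nonneg_left (by positivity) hn1 (by linarith)
    calc √(2 * L / n) * √(2 * L / ((n : ℝ) - 1))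
        ≤ √(2 * L / ((n : ℝ) - 1)) * √(2 * L / ((n : ℝ) - 1)) := by gcongr
      _ = 2 * L / ((n : ℝ) - 1) := Real.mul_self_sqrt (by positivity)
  rw [hsplit]
  have := mul_le_mul_of_nonneg_left (hy.trans hvar_le) (Real.sqrt_nonneg (2 * L / n))
  rw [mul_sub] at this
  linarith

theorem abs_sub_le_of_mem_confSet_of_mem_convexHull (hn : 2 ≤ n) (hL : 0 ≤ L) {phat x y : ℝ}
    (hx : x ∈ confSet phat n L) (hy : y ∈ convexHull ℝ (confSet phat n L)) :
    |x - y| ≤ 2 * √(2 * L / n) * √y + 26 * L / (3 * ((n : ℝ) - 1)) := by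
  obtain ⟨-, -, -, -, hx_dev⟩ := hx
  obtain ⟨hy_var, hy_dev⟩ := convexHull_confSet_subset phat n L hy
  rw [Metric.mem_closedBall, Real.dist_eq, abs_sub_comm] at hy_dev
  have hconst : 2 * (2 * L / ((n : ℝ) - 1)) + 2 * (7 * L / (3 * ((n : ℝ) - 1))) =
      26 * L / (3 * ((n : ℝ) - 1)) := by
    have : (n : ℝ) - 1 ≠ 0 := (sub_pos.2 (Nat.one_lt_cast.2 hn)).ne'
    field_simp
    ring
  calc |x - y| ≤ |phat - x| + |phat - y| := by
        rw [abs_sub_comm phat x]; exact abs_sub_le x phat y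
    _ ≤ _ := by linarith [sqrt_two_mul_var_le hn hL hy_var]

end ConfidenceSet

theorem abs_sum_mul_sub_sum_mul_le {ι : Type*} (N : Finset ι) {p q f : ι → ℝ} {μ a b M : ℝ}
    (hq : ∀ x ∈ N, 0 ≤ q x) (hsum : ∑ x ∈ N, p x = ∑ x ∈ N, q x)
    (hpq : ∀ x ∈ N, |p x - q x| ≤ a * √(q x) + b) (ha : 0 ≤ a) (hb : 0 ≤ b)
    (hf : ∀ x ∈ N, |f x - μ| ≤ M) :
    |∑ x ∈ N, p x * f x - ∑ x ∈ N, q x * f x| ≤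
      b * (#N * M) + a * (√(#N : ℝ) * √(∑ x ∈ N, q x * (f x - μ) ^ 2)) := by
  have hcentre : ∑ x ∈ N, p x * f x - ∑ x ∈ N, q x * f x =
      ∑ x ∈ N, (p x - q x) * (f x - μ) := by
    simp only [sub_mul, mul_sub, sum_sub_distrib, ← sum_mul, hsum]
    ring
  have hcauchy : ∑ x ∈ N, √(q x) * |f x - μ| ≤
      √(#N : ℝ) * √(∑ x ∈ N, q x * (f x - μ) ^ 2) := by
    have := Real.sum_mul_le_sqrt_mul_sqrt N (fun _ => (1 : ℝ)) fun x => √(q x) * |f x - μ|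
    simp only [one_mul, one_pow, sum_const, nsmul_eq_mul, mul_one, mul_pow, sq_abs] at this
    have hsq : ∑ x ∈ N, √(q x) ^ 2 * (f x - μ) ^ 2 = ∑ x ∈ N, q x * (f x - μ) ^ 2 :=
      sum_congr rfl fun x hx => by rw [Real.sq_sqrt (hq x hx)]
    rwa [hsq] at this
  rw [hcentre]
  calc |∑ x ∈ N, (p x - q x) * (f x - μ)|
      ≤ ∑ x ∈ N, |p x - q x| * |f x - μ| := by
        simpa only [abs_mul] using abs_sum_le_sum_abs (fun x => (p x - q x) * (f x - μ)) N
    _ ≤ ∑ x ∈ N, (b * M + a * (√(q x) * |f x - μ|)) := by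
        refine sum_le_sum fun x hx => ?_
        have h1 := mul_le_mul_of_nonneg_right (hpq x hx) (abs_nonneg (f x - μ))
        have h2 := mul_le_mul_of_nonneg_left (hf x hx) hb
        linear_combination h1 + h2
    _ ≤ b * (#N * M) + a * (√(#N : ℝ) * √(∑ x ∈ N, q x * (f x - μ) ^ 2)) := by
        rw [sum_add_distrib, sum_const, nsmul_eq_mul, ← mul_sum]
        linarith [mul_le_mul_of_nonneg_left hcauchy ha]

section ValueFunction

variable {S : Type*} [Fintype S]

theorem Vf_nonneg {q : ℕ → S → S → ℝ} {r : ℕ → S → ℝ} (hr : ∀ t s, 0 ≤ r t s) {i j : ℕ}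
    (hq : ∀ t, i ≤ t → t < j → ∀ s s', 0 ≤ q t s s') (s : S) : 0 ≤ Vf q r i j s := by
  rw [Vf]
  split_ifs with hij
  · exact add_nonneg (hr i s) <| sum_nonneg fun s' _ =>
      mul_nonneg (hq i le_rfl hij s s') (Vf_nonneg hr (fun t ht ht' => hq t (by omega) ht') s')
  · exact hr j s
termination_by j - i

theorem Pop_eq_sum_of_support {p : ℕ → S → S → ℝ} {t : ℕ} {s : S} {N : Finset S}
    (hN : ∀ s' ∉ N, p t s s' = 0) (f : S → ℝ) :
    Pop p t f s = ∑ s' ∈ N, p t s s' * f s' :=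
  (sum_subset (subset_univ N) fun s' _ hs' => by rw [hN s' hs', zero_mul]).symm

theorem abs_sub_Pop_le_supNorm [Nonempty S] {q : ℕ → S → S → ℝ} {t : ℕ} {s : S}
    (hq_nonneg : ∀ s', 0 ≤ q t s s') (hq_sum : ∑ s', q t s s' = 1) {f : S → ℝ}
    (hf : ∀ s', 0 ≤ f s') (s' : S) : |f s' - Pop q t f s| ≤ supNorm f := by
  have hle : ∀ x, f x ≤ supNorm f := fun x =>
    (le_abs_self _).trans (le_sup' (fun x => |f x|) (mem_univ x))
  have hPop_nonneg : 0 ≤ Pop q t f s := sum_nonneg fun x _ => mul_nonneg (hq_nonneg x) (hf x)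
  have hPop_le : Pop q t f s ≤ supNorm f :=
    calc Pop q t f s ≤ ∑ x, q t s x * supNorm f :=
          sum_le_sum fun x _ => mul_le_mul_of_nonneg_left (hle x) (hq_nonneg x)
      _ = supNorm f := by rw [← sum_mul, hq_sum, one_mul]
  rw [abs_le]
  constructor <;> linarith [hf s', hle s']

end ValueFunction

theorem expected_value_difference_confidence_bound_general
    {S : Type*} [Fintype S] [Nonempty S] (H : ℕ)
    (r : ℕ → S → ℝ) (p q : ℕ → S → S → ℝ)
    (hr : ∀ t, ∀ s : S, 0 ≤ r t s)
    (hp_sum : ∀ t, 1 ≤ t → t ≤ H → ∀ s, ∑ s', p t s s' = 1)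
    (hq_nonneg : ∀ t, 1 ≤ t → t ≤ H → ∀ s s', 0 ≤ q t s s')
    (hq_sum : ∀ t, 1 ≤ t → t ≤ H → ∀ s, ∑ s', q t s s' = 1)
    (i j : ℕ) (hi : 1 ≤ i) (hij : i < j) (hj : j ≤ H) (s : S)
    (n : ℕ) (hn : 2 ≤ n) (L : ℝ) (hL : 0 < L)
    (N : Finset S)
    (hsupp : ∀ s' ∉ N, p i s s' = 0 ∧ q i s s' = 0)
    (hconf : ∀ s' ∈ N, ∃ phat : ℝ, 0 ≤ phat ∧ phat ≤ 1 ∧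
      p i s s' ∈ confSet phat n L ∧ q i s s' ∈ convexHull ℝ (confSet phat n L)) :
    |Pop p i (Vf q r (i + 1) j) s - Pop q i (Vf q r (i + 1) j) s| ≤
      (26 * N.card * L / (3 * ((n : ℝ) - 1))) * supNorm (Vf q r (i + 1) j) +
        Real.sqrt (8 * N.card * L / n) * Real.sqrt (sigmaSq q r i j s) := by
  have hiH : i ≤ H := hij.le.trans hj
  set V := Vf q r (i + 1) j
  have hV : ∀ s', 0 ≤ V s' := Vf_nonneg hr fun t ht ht' => hq_nonneg t (by omega) (by omega)
  have hp_supp : ∀ s' ∉ N, p i s s' = 0 := fun s' hs' => (hsupp s' hs').1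
  have hq_supp : ∀ s' ∉ N, q i s s' = 0 := fun s' hs' => (hsupp s' hs').2
  have hsum : ∑ s' ∈ N, p i s s' = ∑ s' ∈ N, q i s s' :=
    ((sum_subset (subset_univ N) fun s' _ hs' => hp_supp s' hs').trans (hp_sum i hi hiH s)).trans
      ((sum_subset (subset_univ N) fun s' _ hs' => hq_supp s' hs').trans (hq_sum i hi hiH s)).symm
  have hn1 : (0 : ℝ) < (n : ℝ) - 1 := sub_pos.2 (Nat.one_lt_cast.2 hn)
  have hdiff := abs_sum_mul_sub_sum_mul_le N (f := V) (μ := Pop q i V s)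
    (fun s' _ => hq_nonneg i hi hiH s s') hsum
    (fun s' hs' => by
      obtain ⟨phat, -, -, hp_conf, hq_conf⟩ := hconf s' hs'
      exact abs_sub_le_of_mem_confSet_of_mem_convexHull hn hL.le hp_conf hq_conf)
    (by positivity) (div_nonneg (by positivity) (by positivity))
    (fun s' _ => abs_sub_Pop_le_supNorm (hq_nonneg i hi hiH s) (hq_sum i hi hiH s) hV s')
  have hvar : ∑ s' ∈ N, q i s s' * (V s' - Pop q i V s) ^ 2 ≤ sigmaSq q r i j s := by
    rw [sigmaSq, if_pos hij]
    exact sum_le_sum_of_subset_of_nonneg (subset_univ N)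
      fun s' _ _ => mul_nonneg (hq_nonneg i hi hiH s s') (sq_nonneg _)
  have hconst : 2 * √(2 * L / n) * √(#N : ℝ) = √(8 * #N * L / n) := by
    rw [show (8 : ℝ) * #N * L / n = 2 ^ 2 * (2 * L / n * #N) by ring,
      Real.sqrt_mul (by positivity), Real.sqrt_sq zero_le_two, Real.sqrt_mul (by positivity)]
    ring
  rw [Pop_eq_sum_of_support hp_supp, Pop_eq_sum_of_support hq_supp]
  calc _ ≤ _ := hdiff
    _ ≤ 26 * L / (3 * ((n : ℝ) - 1)) * (#N * supNorm V) +
        2 * √(2 * L / n) * (√(#N : ℝ) * √(sigmaSq q r i j s)) := by gcongr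
    _ = _ := by rw [← hconst]; ring

/-- Bound on the difference of the expected optimistic value of successor states under
the true and the optimistic model, when both models lie in (the convex hull of) the
confidence set around a common empirical estimate. -/
theorem expected_value_difference_confidence_bound
    {S : Type*} [Fintype S] [Nonempty S] (H : ℕ) (hH : 1 ≤ H)
    (r : ℕ → S → ℝ) (p q : ℕ → S → S → ℝ)
    (hr : ∀ t, ∀ s : S, 0 ≤ r t s)
    (hp_nonneg : ∀ t, 1 ≤ t → t ≤ H → ∀ s s', 0 ≤ p t s s')
    (hp_sum : ∀ t, 1 ≤ t → t ≤ H → ∀ s, ∑ s', p t s s' = 1)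
    (hq_nonneg : ∀ t, 1 ≤ t → t ≤ H → ∀ s s', 0 ≤ q t s s')
    (hq_sum : ∀ t, 1 ≤ t → t ≤ H → ∀ s, ∑ s', q t s s' = 1)
    (i j : ℕ) (hi : 1 ≤ i) (hij : i < j) (hj : j ≤ H) (s : S)
    (n : ℕ) (hn : 2 ≤ n) (L : ℝ) (hL : 0 < L)
    (N : Finset S)
    (hsupp : ∀ s' ∉ N, p i s s' = 0 ∧ q i s s' = 0)
    (hconf : ∀ s' ∈ N, ∃ phat : ℝ, 0 ≤ phat ∧ phat ≤ 1 ∧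
      p i s s' ∈ confSet phat n L ∧ q i s s' ∈ convexHull ℝ (confSet phat n L)) :
    |Pop p i (Vf q r (i + 1) j) s - Pop q i (Vf q r (i + 1) j) s| ≤
      (26 * N.card * L / (3 * ((n : ℝ) - 1))) * supNorm (Vf q r (i + 1) j) +
        Real.sqrt (8 * N.card * L / n) * Real.sqrt (sigmaSq q r i j s) :=
  expected_value_difference_confidence_bound_general H r p q hr hp_sum hq_nonneg hq_sum i j hi hij
    hj s n hn L hL N hsupp hconf
end
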